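/- arXiv:1902.01786 — 2 statements merged into one kernel-verified Lean document; each statement's English description precedes it below -/
import Mathlib

section
/- Let T > 0. For i ∈ {1, 2}, let z_hi_i : [0, T] → ℝ and z_des_i : [0, T] → ℝ be absolutely continuous functions with z_hi_i(0) = z_des_i(0), and let g_i : [0, T] → ℝ be integrable with g_i(t) ≥ 0 for all t, such that for almost every t ∈ [0, T], |ż_hi_i(t) − ż_des_i(t)| ≤ g_i(t). Then there exist measurable functions d_1, d_2 : [0, T] → [−1, 1] such that for every t ∈ [0, T] and each i ∈ {1, 2}, z_hi_i(t) = z_hi_i(0) + ∫₀ᵗ (ż_des_i(τ) + g_i(τ)·d_i(τ)) dτ. -/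
open MeasureTheory Set

/-!
Where `g > 0` the disturbance is forced to be `(ż_hi - ż_des) / g`, which lies in `[-1, 1]` by the
tracking error bound; where `g = 0` the bound forces `ż_hi = ż_des` and any value works. Clamping
the quotient to `[-1, 1]` (which also absorbs the junk value of division by zero) gives one measurable
formula valid everywhere, and the two integrands then agree almost everywhere on `[0, T]`.
-/

theorem mul_projIcc_div_of_abs_le {x c : ℝ} (hxc : |x| ≤ c) :
    c * (projIcc (-1) 1 (by norm_num) (x / c) : ℝ) = x := by
  rcases (abs_nonneg x |>.trans hxc).eq_or_lt with hc | hc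
  · subst hc
    simp [abs_nonpos_iff.mp hxc]
  · have hmem : x / c ∈ Icc (-1 : ℝ) 1 := by
      rw [mem_Icc, le_div_iff₀ hc, div_le_one hc]
      constructor <;> linarith [abs_le.mp hxc]
    rw [projIcc_of_mem _ hmem, mul_div_cancel₀ _ hc.ne']

theorem exists_measurable_mem_Icc_mul_ae_eq {α : Type*} [MeasurableSpace α] {μ : Measure α}
    {u g : α → ℝ} (hu : AEMeasurable u μ) (hg : AEMeasurable g μ)
    (hug : ∀ᵐ t ∂μ, |u t| ≤ g t) :
    ∃ d : α → ℝ, Measurable d ∧ (∀ t, d t ∈ Icc (-1 : ℝ) 1) ∧ g * d =ᵐ[μ] u := by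
  refine ⟨fun t => projIcc (-1) 1 (by norm_num) (hu.mk u t / hg.mk g t), ?_,
    fun t => (projIcc (-1) 1 _ _).2, ?_⟩
  · exact (continuous_subtype_val.comp continuous_projIcc).measurable.comp
      (hu.measurable_mk.div hg.measurable_mk)
  · filter_upwards [hug, hu.ae_eq_mk, hg.ae_eq_mk] with t ht hut hgt
    simp only [Pi.mul_apply, ← hut, ← hgt]
    exact mul_projIcc_div_of_abs_le ht

theorem intervalIntegral_eq_of_ae_restrict_Icc_eq {φ ψ : ℝ → ℝ} {a b t : ℝ}
    (hφψ : φ =ᵐ[volume.restrict (Icc a b)] ψ) (ht : t ∈ Icc a b) :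
    ∫ τ in a..t, φ τ = ∫ τ in a..t, ψ τ := by
  refine intervalIntegral.integral_congr_ae_restrict
    (ae_restrict_of_ae_restrict_of_subset ?_ hφψ)
  rw [uIoc_of_le ht.1]
  exact Ioc_subset_Icc_self.trans (Icc_subset_Icc_right ht.2)

/-- The absolutely continuous trajectory `zhi i` is represented by its integrable derivative
`f i`, and `h i` is the derivative of the desired trajectory. -/
theorem high_fidelity_matches_trajectory_producing_general
    (T : ℝ)
    (zhi : Fin 2 → ℝ → ℝ) (f h g : Fin 2 → ℝ → ℝ)
    (hf : ∀ i, IntegrableOn (f i) (Icc 0 T))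
    (hh : ∀ i, IntegrableOn (h i) (Icc 0 T))
    (hg : ∀ i, IntegrableOn (g i) (Icc 0 T))
    (hzhi : ∀ i, ∀ t ∈ Icc (0:ℝ) T, zhi i t = zhi i 0 + ∫ τ in (0:ℝ)..t, f i τ)
    (hbound : ∀ i, ∀ᵐ t ∂(volume.restrict (Icc (0:ℝ) T)), |f i t - h i t| ≤ g i t) :
    ∃ d : Fin 2 → ℝ → ℝ,
      (∀ i, Measurable (d i)) ∧
      (∀ i, ∀ t, d i t ∈ Icc (-1:ℝ) 1) ∧
      (∀ i, ∀ t ∈ Icc (0:ℝ) T,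
        zhi i t = zhi i 0 + ∫ τ in (0:ℝ)..t, (h i τ + g i τ * d i τ)) := by
  choose d hd_meas hd_mem hd_ae using fun i =>
    exists_measurable_mem_Icc_mul_ae_eq ((hf i).aemeasurable.sub (hh i).aemeasurable)
      (hg i).aemeasurable (hbound i)
  refine ⟨d, hd_meas, hd_mem, fun i t ht => ?_⟩
  have hintegrand : (fun τ => h i τ + g i τ * d i τ) =ᵐ[volume.restrict (Icc 0 T)] f i := by
    filter_upwards [hd_ae i] with τ hτ
    simp only [Pi.mul_apply, Pi.sub_apply] at hτ
    rw [hτ, add_sub_cancel]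
  rw [intervalIntegral_eq_of_ae_restrict_Icc_eq hintegrand ht]
  exact hzhi i t ht

/-- Lemma 1 of the paper: the high-fidelity model matches the trajectory-producing
model in the shared states.  The absolutely continuous trajectories `zhi i` and
`zdes i` are represented via their integrable derivatives `f i` and `h i`
(fundamental theorem of calculus representation of absolute continuity). -/
theorem high_fidelity_matches_trajectory_producing
    (T : ℝ) (hT : 0 < T)
    (zhi zdes : Fin 2 → ℝ → ℝ) (f h g : Fin 2 → ℝ → ℝ)
    (hf : ∀ i, IntegrableOn (f i) (Icc 0 T))
    (hh : ∀ i, IntegrableOn (h i) (Icc 0 T))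
    (hg : ∀ i, IntegrableOn (g i) (Icc 0 T))
    (hg_nonneg : ∀ i, ∀ t ∈ Icc (0:ℝ) T, 0 ≤ g i t)
    (hzhi : ∀ i, ∀ t ∈ Icc (0:ℝ) T, zhi i t = zhi i 0 + ∫ τ in (0:ℝ)..t, f i τ)
    (hzdes : ∀ i, ∀ t ∈ Icc (0:ℝ) T, zdes i t = zdes i 0 + ∫ τ in (0:ℝ)..t, h i τ)
    (h0 : ∀ i, zhi i 0 = zdes i 0)
    (hbound : ∀ i, ∀ᵐ t ∂(volume.restrict (Icc (0:ℝ) T)), |f i t - h i t| ≤ g i t) :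
    ∃ d : Fin 2 → ℝ → ℝ,
      (∀ i, Measurable (d i)) ∧
      (∀ i, ∀ t, d i t ∈ Icc (-1:ℝ) 1) ∧
      (∀ i, ∀ t ∈ Icc (0:ℝ) T,
        zhi i t = zhi i 0 + ∫ τ in (0:ℝ)..t, (h i τ + g i τ * d i τ)) :=
  high_fidelity_matches_trajectory_producing_general T zhi f h g hf hh hg hzhi hbound
end

section
/- Let v_max > 0, ε ≥ 0, τ_plan ≥ 0, and T ≥ 0, and let D_sense be a real number with D_sense ≥ (T + τ_plan)·v_max + 2ε. Let z : [0, T + τ_plan] → ℝ² satisfy ‖z(t) − z(s)‖ ≤ v_max·|t − s| for all s, t ∈ [0, T + τ_plan] (the vehicle's position moves at speed at most v_max), let ẑ ∈ ℝ² satisfy ‖ẑ − z(0)‖ ≤ ε (the state estimate is within ε of the true initial position), and let p ∈ ℝ² satisfy ‖p − ẑ‖ > D_sense (a point outside the sensor horizon). Then for every t ∈ [0, T + τ_plan], ‖z(t) − p‖ > ε; in particular, since ε ≥ 0, the vehicle's position never reaches p during the combined planning and execution horizon. -/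
/-!
Walking from `p` to `ẑ` via `z(t)` and `z(0)` costs at most `‖z(t) − p‖ + v_max·(T + τ_plan) + ε`,
while `‖p − ẑ‖` exceeds `v_max·(T + τ_plan) + 2ε`; so `‖z(t) − p‖ > ε`.
-/

open Set

theorem norm_sub_le_mul_length_of_speed_le {E : Type*} [SeminormedAddCommGroup E]
    {z : ℝ → E} {v a b s t : ℝ} (hv : 0 ≤ v)
    (hz : ∀ s ∈ Icc a b, ∀ t ∈ Icc a b, ‖z t - z s‖ ≤ v * |t - s|)
    (hs : s ∈ Icc a b) (ht : t ∈ Icc a b) :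
    ‖z t - z s‖ ≤ v * (b - a) :=
  (hz s hs t ht).trans (mul_le_mul_of_nonneg_left (Real.dist_le_of_mem_Icc ht hs) hv)

theorem lt_norm_sub_of_lt_norm_sub_estimate {E : Type*} [SeminormedAddCommGroup E]
    {z z₀ zhat p : E} {r ε : ℝ} (hz : ‖z - z₀‖ ≤ r) (hzhat : ‖zhat - z₀‖ ≤ ε)
    (hp : r + 2 * ε < ‖p - zhat‖) :
    ε < ‖z - p‖ := by
  have htri := dist_triangle4 p z z₀ zhat
  rw [dist_eq_norm, dist_eq_norm, dist_eq_norm, dist_eq_norm, norm_sub_rev p z,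
    norm_sub_rev z₀ zhat] at htri
  linarith

theorem sensor_horizon_persistent_feasibility_general
    (vmax ε τplan T Dsense : ℝ)
    (hvmax : 0 < vmax)
    (hD : Dsense ≥ (T + τplan) * vmax + 2 * ε)
    (z : ℝ → EuclideanSpace ℝ (Fin 2))
    (hz : ∀ s ∈ Icc (0:ℝ) (T + τplan), ∀ t ∈ Icc (0:ℝ) (T + τplan),
      ‖z t - z s‖ ≤ vmax * |t - s|)
    (zhat p : EuclideanSpace ℝ (Fin 2))
    (hzhat : ‖zhat - z 0‖ ≤ ε) (hp : ‖p - zhat‖ > Dsense) :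
    ∀ t ∈ Icc (0:ℝ) (T + τplan), ‖z t - p‖ > ε := by
  intro t ht
  have h0 : (0:ℝ) ∈ Icc 0 (T + τplan) := ⟨le_rfl, ht.1.trans ht.2⟩
  have hmove := norm_sub_le_mul_length_of_speed_le hvmax.le hz h0 ht
  exact lt_norm_sub_of_lt_norm_sub_estimate hmove hzhat (by linarith)

/-- Quantitative core of Lemma 3 of the paper (persistent feasibility via the sensor
horizon): if `D_sense ≥ (T + τ_plan)·v_max + 2ε`, the vehicle moves at speed at most
`v_max`, the state estimate `zhat` is within `ε` of the true initial position, and `p`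
lies outside the sensor horizon (`‖p − zhat‖ > D_sense`), then the vehicle stays more
than `ε` away from `p` throughout the combined planning and execution horizon. -/
theorem sensor_horizon_persistent_feasibility
    (vmax ε τplan T Dsense : ℝ)
    (hvmax : 0 < vmax) (hε : 0 ≤ ε) (hτ : 0 ≤ τplan) (hT : 0 ≤ T)
    (hD : Dsense ≥ (T + τplan) * vmax + 2 * ε)
    (z : ℝ → EuclideanSpace ℝ (Fin 2))
    (hz : ∀ s ∈ Icc (0:ℝ) (T + τplan), ∀ t ∈ Icc (0:ℝ) (T + τplan),
      ‖z t - z s‖ ≤ vmax * |t - s|)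
    (zhat p : EuclideanSpace ℝ (Fin 2))
    (hzhat : ‖zhat - z 0‖ ≤ ε) (hp : ‖p - zhat‖ > Dsense) :
    ∀ t ∈ Icc (0:ℝ) (T + τplan), ‖z t - p‖ > ε :=
  sensor_horizon_persistent_feasibility_general vmax ε τplan T Dsense hvmax hD z hz zhat p hzhat hp
end
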